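/- Let X be an irreducible shift of finite type, Y a sofic shift, and pi: X -> Y an almost invertible factor code (assumed one-block with a magic symbol). Let nu be a fully supported, shift-invariant, ergodic, T_Y-nonsingular measure on Y, and let mu be any shift-invariant measure on X with pi_* mu = nu. Then mu has full support on X. -/

import Mathlib

open MeasureTheory

/-- The left shift by `k` on bi-infinite sequences. `shiftZ 1` is the shift map `σ`. -/
def shiftZ {A : Type*} (k : ℤ) (x : ℤ → A) : ℤ → A := fun n => x (n + k)

/-- The word `w` occurs in `x` at position `i`. -/
def occursAt {A : Type*} (x : ℤ → A) (w : List A) (i : ℤ) : Prop :=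
  ∀ j : Fin w.length, x (i + (j.1 : ℤ)) = w.get j

/-- The word `w` belongs to the language of `X`. -/
def InLanguage {A : Type*} (X : Set (ℤ → A)) (w : List A) : Prop :=
  ∃ x ∈ X, ∃ i : ℤ, occursAt x w i

/-- A shift space: a closed, shift-invariant subset of the full shift. -/
def IsShiftSpace {A : Type*} [TopologicalSpace A] (X : Set (ℤ → A)) : Prop :=
  IsClosed X ∧ ∀ k : ℤ, ∀ x ∈ X, shiftZ k x ∈ X

/-- `x` is doubly transitive in `X`. -/
def DoublyTransitive {A : Type*} (X : Set (ℤ → A)) (x : ℤ → A) : Prop :=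
  ∀ w : List A, InLanguage X w →
    (∀ N : ℤ, ∃ i : ℤ, N ≤ i ∧ occursAt x w i) ∧
    (∀ N : ℤ, ∃ i : ℤ, i ≤ N ∧ occursAt x w i)

/-- Irreducibility: any two words of the language can be joined within the language. -/
def IrreducibleShift {A : Type*} (X : Set (ℤ → A)) : Prop :=
  ∀ u v : List A, InLanguage X u → InLanguage X v →
    ∃ w : List A, InLanguage X (u ++ w ++ v)

/-- `μ` is fully supported on `X`: every open set meeting `X` has positive measure. -/
def FullSupportOn {A : Type*} [TopologicalSpace A] [MeasurableSpace A]
    (μ : Measure (ℤ → A)) (X : Set (ℤ → A)) : Prop :=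
  ∀ U : Set (ℤ → A), IsOpen U → (U ∩ X).Nonempty → 0 < μ U

/-- The Gibbs (homoclinic/tail) relation on `X`. -/
def GibbsRel {A : Type*} (X : Set (ℤ → A)) (x y : ℤ → A) : Prop :=
  x ∈ X ∧ y ∈ X ∧ ∃ N : ℤ, ∀ n : ℤ, N < |n| → x n = y n

/-- A shift of finite type: defined by excluding a finite set of words of some length `n`. -/
def IsSFT {A : Type*} (X : Set (ℤ → A)) : Prop :=
  ∃ (n : ℕ) (F : Finset (List A)),
    X = {x | ∀ i : ℤ, (List.ofFn fun j : Fin n => x (i + (j.1 : ℤ))) ∉ F}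

/-- `μ` is nonsingular for the relation `Rel`: the saturation of any null Borel set is null. -/
def NonsingularFor {P : Type*} [MeasurableSpace P]
    (μ : Measure P) (Rel : P → P → Prop) : Prop :=
  ∀ S : Set P, MeasurableSet S → μ S = 0 → μ {y | ∃ x ∈ S, Rel x y} = 0


/-!
If some cylinder `[w]` of the language of `X` were `μ`-null, shift invariance would make all its
translates null, so `μ` would live on the closed subshift `X_w` of points of `X` avoiding `w`, and
`ν = π_* μ` on the compact set `π(X_w)`. Full support of `ν` then puts every point of `Y` in
`π(X_w)`. But by Baire category the irreducible shift `X` has a doubly transitive point `x`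
through `w`; its image is doubly transitive in `Y`, so `x` is its only preimage, and `x ∉ X_w`.
-/

open Filter

section Words

variable {A : Type*}

theorem occursAt_iff_getElem {x : ℤ → A} {w : List A} {i : ℤ} :
    occursAt x w i ↔ ∀ (j : ℕ) (h : j < w.length), x (i + j) = w[j] :=
  ⟨fun H j h => H ⟨j, h⟩, fun H j => H j.1 j.2⟩

theorem occursAt_shiftZ {x : ℤ → A} {w : List A} {i k : ℤ} :
    occursAt (shiftZ k x) w i ↔ occursAt x w (i + k) := by
  simp only [occursAt, shiftZ, add_right_comm]

theorem occursAt_append {x : ℤ → A} {u v : List A} {i : ℤ} :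
    occursAt x (u ++ v) i ↔ occursAt x u i ∧ occursAt x v (i + u.length) := by
  simp only [occursAt_iff_getElem, List.length_append]
  constructor
  · intro H
    refine ⟨fun j hj => by simpa [List.getElem_append_left hj] using H j (by omega),
      fun j hj => ?_⟩
    simpa [add_assoc, List.getElem_append_right] using H (u.length + j) (by omega)
  · intro ⟨Hu, Hv⟩ j hj
    rcases lt_or_ge j u.length with hju | hju
    · simpa [List.getElem_append_left hju] using Hu j hju
    · have := Hv (j - u.length) (by omega)
      rw [List.getElem_append_right hju, ← this]
      congr 1
      omega

theorem occursAt_comp_map {B : Type*} (Q : A → B) {x : ℤ → A} {w : List A} {i : ℤ}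
    (h : occursAt x w i) : occursAt (Q ∘ x) (w.map Q) i := by
  rw [occursAt_iff_getElem] at h ⊢
  intro j hj
  simp [h j (by simpa using hj)]

theorem exists_inLanguage_map_eq {B : Type*} {X : Set (ℤ → A)} {Y : Set (ℤ → B)} {Q : A → B}
    (hfactor : (fun x => Q ∘ x) '' X = Y) {v : List B} (hv : InLanguage Y v) :
    ∃ u, InLanguage X u ∧ u.map Q = v := by
  obtain ⟨_, ⟨x, hxX, rfl⟩, i, hx⟩ := hfactor ▸ hv
  refine ⟨List.ofFn fun j : Fin v.length => x (i + j), ⟨x, hxX, i, fun j => by simp⟩, ?_⟩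
  refine List.ext_getElem (by simp) fun j hj _ => ?_
  simpa using hx ⟨j, by simpa using hj⟩

theorem DoublyTransitive.comp {B : Type*} {X : Set (ℤ → A)} {Y : Set (ℤ → B)} {Q : A → B}
    (hfactor : (fun x => Q ∘ x) '' X = Y) {x : ℤ → A} (hx : DoublyTransitive X x) :
    DoublyTransitive Y (Q ∘ x) := by
  intro v hv
  obtain ⟨u, hu, rfl⟩ := exists_inLanguage_map_eq hfactor hv
  obtain ⟨hright, hleft⟩ := hx u hu
  exact ⟨fun N => (hright N).imp fun i h => ⟨h.1, occursAt_comp_map Q h.2⟩,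
    fun N => (hleft N).imp fun i h => ⟨h.1, occursAt_comp_map Q h.2⟩⟩

def wordCylinder (w : List A) (i : ℤ) : Set (ℤ → A) := {x | occursAt x w i}

theorem wordCylinder_eq_iInter (w : List A) (i : ℤ) :
    wordCylinder w i = ⋂ j : Fin w.length, (fun x : ℤ → A => x (i + j)) ⁻¹' {w.get j} := by
  ext x
  simp [wordCylinder, occursAt]

theorem preimage_shiftZ_wordCylinder (w : List A) (i k : ℤ) :
    shiftZ k ⁻¹' wordCylinder w i = wordCylinder w (i + k) := by
  ext x
  exact occursAt_shiftZ

def avoiding (X : Set (ℤ → A)) (w : List A) : Set (ℤ → A) :=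
  X ∩ ⋂ i, (wordCylinder w i)ᶜ

def centralWord (x : ℤ → A) (n : ℕ) : List A :=
  List.ofFn fun j : Fin (2 * n + 1) => x (j - n)

theorem occursAt_centralWord_iff {x z : ℤ → A} {n : ℕ} :
    occursAt z (centralWord x n) (-n) ↔ ∀ i : ℤ, |i| ≤ n → z i = x i := by
  simp only [occursAt_iff_getElem, centralWord, List.length_ofFn, List.getElem_ofFn]
  constructor
  · intro H i hi
    rw [abs_le] at hi
    have := H (i + n).toNat (by omega)
    rw [Int.toNat_of_nonneg (by omega)] at this
    simpa using this
  · intro H j hj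
    rw [H _ (abs_le.2 ⟨by omega, by omega⟩)]
    congr 1
    ring

theorem occursAt_centralWord_self (x : ℤ → A) (n : ℕ) : occursAt x (centralWord x n) (-n) :=
  occursAt_centralWord_iff.2 fun _ _ => rfl

def occursAround (v : List A) (N : ℤ) : Set (ℤ → A) :=
  (⋃ i ∈ Set.Ici N, wordCylinder v i) ∩ ⋃ i ∈ Set.Iic N, wordCylinder v i

theorem doublyTransitive_iff {X : Set (ℤ → A)} {x : ℤ → A} :
    DoublyTransitive X x ↔ ∀ v, InLanguage X v → ∀ N, x ∈ occursAround v N := by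
  simp [DoublyTransitive, occursAround, wordCylinder, forall_and]

section Topology

variable [TopologicalSpace A]

theorem isOpen_wordCylinder [DiscreteTopology A] (w : List A) (i : ℤ) :
    IsOpen (wordCylinder w i) := by
  rw [wordCylinder_eq_iInter]
  exact isOpen_iInter_of_finite fun j => (isOpen_discrete _).preimage (continuous_apply _)

theorem isOpen_occursAround [DiscreteTopology A] (v : List A) (N : ℤ) :
    IsOpen (occursAround v N) :=
  (isOpen_biUnion fun _ _ => isOpen_wordCylinder _ _).inter
    (isOpen_biUnion fun _ _ => isOpen_wordCylinder _ _)

theorem isClosed_avoiding [DiscreteTopology A] {X : Set (ℤ → A)} (hX : IsClosed X)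
    (w : List A) : IsClosed (avoiding X w) :=
  hX.inter (isClosed_iInter fun i => (isOpen_wordCylinder w i).isClosed_compl)

theorem eventually_wordCylinder_centralWord_subset {U : Set (ℤ → A)} (hU : IsOpen U)
    {x : ℤ → A} (hx : x ∈ U) : ∀ᶠ n in atTop, wordCylinder (centralWord x n) (-n) ⊆ U := by
  obtain ⟨I, u, hIu, hIU⟩ := isOpen_pi_iff.1 hU x hx
  filter_upwards [eventually_ge_atTop (I.sup Int.natAbs)] with n hn z hz
  refine hIU fun i hi => ?_
  have hin : |i| ≤ n := by
    have := (Finset.le_sup hi).trans hn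
    rw [Int.abs_eq_natAbs]
    exact_mod_cast this
  rw [occursAt_centralWord_iff.1 hz i hin]
  exact (hIu i hi).2

end Topology

end Words

section Language

variable {A : Type*} [TopologicalSpace A] {X : Set (ℤ → A)}

theorem InLanguage.exists_occursAt (hX : IsShiftSpace X) {w : List A} (hw : InLanguage X w)
    (p : ℤ) : ∃ z ∈ X, occursAt z w p := by
  obtain ⟨x, hxX, i, hx⟩ := hw
  refine ⟨shiftZ (i - p) x, hX.2 _ x hxX, ?_⟩
  rwa [occursAt_shiftZ, add_sub_cancel]

theorem exists_occursAt_flanked (hX : IsShiftSpace X) (hXirr : IrreducibleShift X)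
    {c v : List A} (hc : InLanguage X c) (hv : InLanguage X v) (p : ℤ) :
    ∃ z ∈ X, occursAt z c p ∧ (∃ i, p + c.length ≤ i ∧ occursAt z v i) ∧
      ∃ i, i + v.length ≤ p ∧ occursAt z v i := by
  obtain ⟨g, hg⟩ := hXirr c v hc hv
  obtain ⟨g', hg'⟩ := hXirr v (c ++ g ++ v) hv hg
  obtain ⟨z, hzX, hz⟩ := hg'.exists_occursAt hX (p - (v ++ g').length)
  simp only [occursAt_append, List.length_append, Nat.cast_add] at hz
  obtain ⟨⟨hvl, -⟩, ⟨hc, -⟩, hvr⟩ := hz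
  refine ⟨z, hzX, ?_, ⟨_, ?_, hvr⟩, ⟨_, ?_, hvl⟩⟩
  · convert hc using 1
    ring
  · linarith
  · linarith

theorem exists_mem_inter_occursAround (hX : IsShiftSpace X) (hXirr : IrreducibleShift X)
    {U : Set (ℤ → A)} (hU : IsOpen U) {x : ℤ → A} (hxU : x ∈ U) (hxX : x ∈ X)
    {v : List A} (hv : InLanguage X v) (N : ℤ) : ∃ z ∈ X, z ∈ U ∩ occursAround v N := by
  obtain ⟨n, hnU, hnN⟩ := ((eventually_wordCylinder_centralWord_subset hU hxU).and
    (eventually_ge_atTop N.natAbs)).exists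
  obtain ⟨z, hzX, hzc, ⟨i, hi, hzi⟩, ⟨i', hi', hzi'⟩⟩ := exists_occursAt_flanked hX hXirr
    ⟨x, hxX, _, occursAt_centralWord_self x n⟩ hv (-n)
  refine ⟨z, hzX, hnU hzc, ?_⟩
  simp only [occursAround, Set.mem_inter_iff, Set.mem_iUnion]
  simp only [centralWord, List.length_ofFn] at hi
  exact ⟨⟨i, Set.mem_Ici.2 (by omega), hzi⟩, ⟨i', Set.mem_Iic.2 (by omega), hzi'⟩⟩

theorem exists_doublyTransitive [DiscreteTopology A] [Finite A] (hX : IsShiftSpace X)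
    (hXirr : IrreducibleShift X) {w : List A} (hw : InLanguage X w) :
    ∃ x ∈ X, DoublyTransitive X x ∧ occursAt x w 0 := by
  have : CompactSpace X := isCompact_iff_compactSpace.1 hX.1.isCompact
  have : BaireSpace X := BaireSpace.of_t2Space_locallyCompactSpace
  let O : {v // InLanguage X v} × ℤ → Set X := fun p => Subtype.val ⁻¹' occursAround p.1 p.2
  have hO_open : ∀ p, IsOpen (O p) := fun p =>
    (isOpen_occursAround _ _).preimage continuous_subtype_val
  have hO_dense : ∀ p, Dense (O p) := by
    refine fun p => dense_iff_inter_open.2 fun U hU ⟨x, hxU⟩ => ?_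
    obtain ⟨V, hV, rfl⟩ := isOpen_induced_iff.1 hU
    obtain ⟨z, hzX, hz⟩ := exists_mem_inter_occursAround hX hXirr hV hxU x.2 p.1.2 p.2
    exact ⟨⟨z, hzX⟩, hz⟩
  obtain ⟨x, hxw, hxO⟩ := (dense_iInter_of_isOpen hO_open hO_dense).inter_open_nonempty
    (Subtype.val ⁻¹' wordCylinder w 0) ((isOpen_wordCylinder w 0).preimage continuous_subtype_val)
    (let ⟨z, hzX, hz⟩ := hw.exists_occursAt hX 0; ⟨⟨z, hzX⟩, hz⟩)
  exact ⟨x, x.2, doublyTransitive_iff.2 fun v hv N => Set.mem_iInter.1 hxO ⟨⟨v, hv⟩, N⟩, hxw⟩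

end Language

section Measure

variable {A : Type*} [MeasurableSpace A]

theorem measurable_shiftZ (k : ℤ) : Measurable (shiftZ k : (ℤ → A) → ℤ → A) :=
  measurable_pi_lambda _ fun n => measurable_pi_apply (n + k)

theorem measurableSet_wordCylinder [MeasurableSingletonClass A] (w : List A) (i : ℤ) :
    MeasurableSet (wordCylinder w i) := by
  rw [wordCylinder_eq_iInter]
  exact .iInter fun j => measurable_pi_apply _ (measurableSet_singleton _)

theorem measure_wordCylinder_eq [MeasurableSingletonClass A] {μ : Measure (ℤ → A)}
    (hμinv : μ.map (shiftZ 1) = μ) (w : List A) (i j : ℤ) :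
    μ (wordCylinder w i) = μ (wordCylinder w j) := by
  have hstep : ∀ i, μ (wordCylinder w (i + 1)) = μ (wordCylinder w i) := fun i => by
    rw [← preimage_shiftZ_wordCylinder, ← Measure.map_apply (measurable_shiftZ 1)
      (measurableSet_wordCylinder w i), hμinv]
  suffices h : ∀ i, μ (wordCylinder w i) = μ (wordCylinder w 0) from (h i).trans (h j).symm
  intro i
  induction i using Int.induction_on with
  | zero => rfl
  | succ k ih => rw [hstep, ih]
  | pred k ih => rw [← ih, ← hstep, sub_add_cancel]

theorem measure_compl_avoiding_eq_zero {X : Set (ℤ → A)} (hXm : MeasurableSet X)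
    {μ : Measure (ℤ → A)} [IsProbabilityMeasure μ] (hμconc : μ X = 1) {w : List A}
    (hnull : ∀ i, μ (wordCylinder w i) = 0) : μ (avoiding X w)ᶜ = 0 := by
  rw [avoiding, Set.compl_inter, Set.compl_iInter]
  simp only [compl_compl]
  exact measure_union_null ((prob_compl_eq_zero_iff hXm).2 hμconc) (measure_iUnion_null hnull)

end Measure

theorem measure_wordCylinder_pos {A B : Type*} [Finite A] [TopologicalSpace A]
    [DiscreteTopology A] [MeasurableSpace A] [BorelSpace A]
    [TopologicalSpace B] [DiscreteTopology B] [MeasurableSpace B] [BorelSpace B]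
    {X : Set (ℤ → A)} (hX : IsShiftSpace X) (hXirr : IrreducibleShift X)
    {Y : Set (ℤ → B)} {Q : A → B} (hfactor : (fun x => Q ∘ x) '' X = Y)
    (hai : ∀ y ∈ Y, DoublyTransitive Y y → ∃! x, x ∈ X ∧ Q ∘ x = y)
    {ν : Measure (ℤ → B)} (hνsupp : FullSupportOn ν Y)
    {μ : Measure (ℤ → A)} [IsProbabilityMeasure μ] (hμconc : μ X = 1)
    (hμinv : μ.map (shiftZ 1) = μ) (hlift : μ.map (fun x => Q ∘ x) = ν)
    {w : List A} (hw : InLanguage X w) (i : ℤ) : 0 < μ (wordCylinder w i) := by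
  by_contra! h
  have hnull : μ (avoiding X w)ᶜ = 0 := measure_compl_avoiding_eq_zero hX.1.measurableSet
    hμconc fun j => (measure_wordCylinder_eq hμinv w j i).trans (nonpos_iff_eq_zero.1 h)
  have hK : IsClosed ((fun x => Q ∘ x) '' avoiding X w) :=
    ((isClosed_avoiding hX.1 w).isCompact.image
      (continuous_pi fun n => continuous_of_discreteTopology.comp (continuous_apply n))).isClosed
  obtain ⟨x, hxX, hxDT, hxw⟩ := exists_doublyTransitive hX hXirr hw
  have hxY : Q ∘ x ∈ Y := hfactor ▸ ⟨x, hxX, rfl⟩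
  have hxK : Q ∘ x ∉ (fun x => Q ∘ x) '' avoiding X w := by
    rintro ⟨z, ⟨hzX, hzw⟩, hzx⟩
    obtain ⟨_, -, hunique⟩ := hai _ hxY (hxDT.comp hfactor)
    have hzx : z = x := (hunique z ⟨hzX, hzx⟩).trans (hunique x ⟨hxX, rfl⟩).symm
    exact Set.mem_iInter.1 hzw 0 (hzx ▸ hxw)
  obtain ⟨n, hn⟩ := (eventually_wordCylinder_centralWord_subset hK.isOpen_compl hxK).exists
  have hpos := hνsupp _ (isOpen_wordCylinder _ _) ⟨Q ∘ x, occursAt_centralWord_self _ n, hxY⟩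
  refine hpos.ne' ?_
  have hπ : Measurable fun x : ℤ → A => Q ∘ x :=
    measurable_pi_lambda _ fun n => (measurable_of_countable Q).comp (measurable_pi_apply n)
  rw [← hlift, Measure.map_apply hπ (measurableSet_wordCylinder _ _)]
  exact measure_mono_null (fun z hz hzw => hn hz ⟨z, hzw, rfl⟩) hnull

theorem stmt19_general {A B : Type*} [Fintype A] [TopologicalSpace A] [DiscreteTopology A]
    [MeasurableSpace A] [BorelSpace A]
    [TopologicalSpace B] [DiscreteTopology B]
    [MeasurableSpace B] [BorelSpace B]
    (X : Set (ℤ → A)) (hX : IsShiftSpace X) (hXirr : IrreducibleShift X)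
    (Y : Set (ℤ → B))
    (Q : A → B) (hfactor : (fun x => Q ∘ x) '' X = Y)
    (hai : ∀ y ∈ Y, DoublyTransitive Y y → ∃! x, x ∈ X ∧ Q ∘ x = y)
    (ν : Measure (ℤ → B)) (hνsupp : FullSupportOn ν Y)
    (μ : Measure (ℤ → A)) (hμprob : IsProbabilityMeasure μ) (hμconc : μ X = 1)
    (hμinv : μ.map (shiftZ 1) = μ) (hlift : μ.map (fun x => Q ∘ x) = ν) :
    FullSupportOn μ X := by
  rintro U hU ⟨x, hxU, hxX⟩
  obtain ⟨n, hn⟩ := (eventually_wordCylinder_centralWord_subset hU hxU).exists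
  have hw : InLanguage X (centralWord x n) := ⟨x, hxX, _, occursAt_centralWord_self x n⟩
  exact (measure_wordCylinder_pos hX hXirr hfactor hai hνsupp hμconc hμinv hlift hw _).trans_le
    (measure_mono hn)

/-- let `π = Q ∘ ·` be an almost invertible one-block factor code with magic
symbol `b` from an irreducible SFT `X` onto a sofic shift `Y`. Let `ν` be a fully
supported, shift-invariant, ergodic, `T_Y`-nonsingular measure on `Y`, and let `μ` be any
shift-invariant measure on `X` with `π_* μ = ν`. Then `μ` has full support on `X`. -/
theorem stmt19 {A B : Type*} [Fintype A] [TopologicalSpace A] [DiscreteTopology A]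
    [MeasurableSpace A] [BorelSpace A]
    [Fintype B] [TopologicalSpace B] [DiscreteTopology B]
    [MeasurableSpace B] [BorelSpace B]
    (X : Set (ℤ → A)) (hX : IsShiftSpace X) (hSFT : IsSFT X) (hXirr : IrreducibleShift X)
    (Y : Set (ℤ → B)) (hY : IsShiftSpace Y)
    (Q : A → B) (hfactor : (fun x => Q ∘ x) '' X = Y)
    (hai : ∀ y ∈ Y, DoublyTransitive Y y → ∃! x, x ∈ X ∧ Q ∘ x = y)
    (b : B) (hb : InLanguage Y [b]) (a : A) (hab : Q a = b)
    (huniq : ∀ a' : A, Q a' = b → a' = a)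
    (ν : Measure (ℤ → B)) (hνprob : IsProbabilityMeasure ν) (hνconc : ν Y = 1)
    (hνerg : Ergodic (shiftZ 1) ν) (hνsupp : FullSupportOn ν Y)
    (hνns : NonsingularFor ν (GibbsRel Y))
    (μ : Measure (ℤ → A)) (hμprob : IsProbabilityMeasure μ) (hμconc : μ X = 1)
    (hμinv : μ.map (shiftZ 1) = μ) (hlift : μ.map (fun x => Q ∘ x) = ν) :
    FullSupportOn μ X :=
  stmt19_general X hX hXirr Y Q hfactor hai ν hνsupp μ hμprob hμconc hμinv hlift
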